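/- arXiv:2505.15006 — 3 statements merged into one kernel-verified Lean document; each statement's English description precedes it below -/
import Mathlib

section
/- Let F : H₂ →→ H₂ be a monotone set-valued operator, D : H₂ → H₂ a monotone bounded linear operator, and C : H₁ → H₂ bounded linear. If y₁, y₂ ∈ (F⁻¹ + D)⁻¹(Cx) for some x ∈ H₁, then ⟨D(y₁ − y₂), y₁ − y₂⟩ = 0. -/
open RealInnerProductSpace

variable {H₁ H₂ : Type*}
  [NormedAddCommGroup H₁] [InnerProductSpace ℝ H₁]
  [NormedAddCommGroup H₂] [InnerProductSpace ℝ H₂]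

/-- A set-valued operator is monotone. -/
def SVMonotone (F : H₂ → Set H₂) : Prop :=
  ∀ x y u v, u ∈ F x → v ∈ F y → 0 ≤ ⟪u - v, x - y⟫

/-- if `F` is monotone, `D` monotone bounded linear, and
`y₁, y₂ ∈ (F⁻¹ + D)⁻¹(Cx)` (i.e. `yᵢ ∈ F (Cx − D yᵢ)`), then `⟪D(y₁ − y₂), y₁ − y₂⟫ = 0`. -/
theorem stmt5 (F : H₂ → Set H₂) (hF : SVMonotone F)
    (D : H₂ →L[ℝ] H₂) (hD : ∀ w, 0 ≤ ⟪D w, w⟫)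
    (C : H₁ →L[ℝ] H₂) (x : H₁) (y₁ y₂ : H₂)
    (h₁ : y₁ ∈ F (C x - D y₁)) (h₂ : y₂ ∈ F (C x - D y₂)) :
    ⟪D (y₁ - y₂), y₁ - y₂⟫ = 0 := by
  have h := hF _ _ _ _ h₁ h₂
  have key : (C x - D y₁) - (C x - D y₂) = -(D (y₁ - y₂)) := by
    rw [map_sub]; abel
  rw [key] at h
  rw [inner_neg_right, real_inner_comm] at h
  have h' := hD (y₁ - y₂)
  linarith
end

section
/- Let F : H₂ →→ H₂ be monotone, D : H₂ → H₂ a semi-coercive monotone bounded linear operator with coercivity constant c > 0 on rge(D + Dᵀ), and C : H₁ → H₂ bounded linear. Suppose y₁, y₂ ∈ rge(D + Dᵀ) satisfy yᵢ + y₀ ∈ (F⁻¹ + D)⁻¹(Cxᵢ) for i = 1, 2 and a fixed y₀ ∈ H₂. Then ‖y₁ − y₂‖ ≤ (‖C‖/c)‖x₁ − x₂‖. -/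
open RealInnerProductSpace

variable {H₁ H₂ : Type*}
  [NormedAddCommGroup H₁] [InnerProductSpace ℝ H₁]
  [NormedAddCommGroup H₂] [InnerProductSpace ℝ H₂] [CompleteSpace H₂]

/-- under semi-coercivity of `D`, if `y₁, y₂ ∈ rge (D + Dᵀ)` satisfy
`yᵢ + y₀ ∈ (F⁻¹ + D)⁻¹ (C xᵢ)` (i.e. `yᵢ + y₀ ∈ F (C xᵢ − D (yᵢ + y₀))`), then
`‖y₁ − y₂‖ ≤ (‖C‖ / c) ‖x₁ − x₂‖`. -/
theorem stmt6 (F : H₂ → Set H₂) (hF : SVMonotone F)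
    (D : H₂ →L[ℝ] H₂) (hDmono : ∀ w, 0 ≤ ⟪D w, w⟫)
    (c : ℝ) (hc : 0 < c)
    (hD : ∀ z ∈ Set.range (D + ContinuousLinearMap.adjoint D), c * ‖z‖ ^ 2 ≤ ⟪D z, z⟫)
    (C : H₁ →L[ℝ] H₂) (x₁ x₂ : H₁) (y₀ y₁ y₂ : H₂)
    (hy₁ : y₁ ∈ Set.range (D + ContinuousLinearMap.adjoint D))
    (hy₂ : y₂ ∈ Set.range (D + ContinuousLinearMap.adjoint D))
    (h₁ : y₁ + y₀ ∈ F (C x₁ - D (y₁ + y₀)))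
    (h₂ : y₂ + y₀ ∈ F (C x₂ - D (y₂ + y₀))) :
    ‖y₁ - y₂‖ ≤ ‖C‖ / c * ‖x₁ - x₂‖ := by
  set z := y₁ - y₂ with hz
  by_cases hz0 : z = 0
  · simp only [hz] at hz0
    rw [sub_eq_zero] at hz0
    rw [hz, hz0, sub_self, norm_zero]
    positivity
  -- z is in the range
  have hzrge : z ∈ Set.range (D + ContinuousLinearMap.adjoint D) := by
    obtain ⟨a, ha⟩ := hy₁
    obtain ⟨b, hb⟩ := hy₂
    exact ⟨a - b, by rw [map_sub, ha, hb]⟩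
  -- monotonicity of F
  have hmono := hF _ _ _ _ h₁ h₂
  have hsub : (y₁ + y₀) - (y₂ + y₀) = z := by rw [hz]; abel
  rw [hsub] at hmono
  have hkey : ⟪D z, z⟫ ≤ ⟪z, C (x₁ - x₂)⟫ := by
    have : (C x₁ - D (y₁ + y₀)) - (C x₂ - D (y₂ + y₀)) = C (x₁ - x₂) - D z := by
      simp [hz, map_sub]; abel
    rw [this, inner_sub_right] at hmono
    have hsym : ⟪z, D z⟫ = ⟪D z, z⟫ := real_inner_comm _ _
    linarith [hmono, hsym]
  have hco := hD z hzrge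
  have hCS : ⟪z, C (x₁ - x₂)⟫ ≤ ‖z‖ * (‖C‖ * ‖x₁ - x₂‖) := by
    calc ⟪z, C (x₁ - x₂)⟫ ≤ ‖z‖ * ‖C (x₁ - x₂)‖ := real_inner_le_norm _ _
    _ ≤ ‖z‖ * (‖C‖ * ‖x₁ - x₂‖) := by
        exact mul_le_mul_of_nonneg_left (C.le_opNorm _) (norm_nonneg _)
  have hzpos : 0 < ‖z‖ := norm_pos_iff.mpr hz0
  have : c * ‖z‖ ^ 2 ≤ ‖z‖ * (‖C‖ * ‖x₁ - x₂‖) := le_trans hco (le_trans hkey hCS)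
  rw [div_mul_eq_mul_div, le_div_iff₀ hc]
  nlinarith [this, hzpos]
end

section
/- Suppose the system (f, B, C, D) is P-passive with f Lipschitz continuous, and F : H₂ →→ H₂ is monotone, D semi-coercive. Then the operator H(x) := Pf(x) + PB(F⁻¹ + D)⁻¹(Cx) is monotone: for any x₁, x₂ and zᵢ ∈ H(xᵢ), ⟨z₁ − z₂, x₁ − x₂⟩ ≥ 0. -/
open RealInnerProductSpace

variable {H₁ H₂ : Type*}
  [NormedAddCommGroup H₁] [InnerProductSpace ℝ H₁] [CompleteSpace H₁]
  [NormedAddCommGroup H₂] [InnerProductSpace ℝ H₂] [CompleteSpace H₂]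

/-- if `(f, B, C, D)` is `P`-passive with `f` Lipschitz, `F` monotone and
`D` semi-coercive, then `H(x) := P f(x) + P B (F⁻¹ + D)⁻¹ (C x)` is monotone:
`z ∈ H(x)` means `z = P f(x) + P (B y)` for some `y ∈ F (C x − D y)`. -/
theorem stmt16 (f : H₁ → H₁) (Lf : NNReal) (hf : LipschitzWith Lf f)
    (B : H₂ →L[ℝ] H₁) (C : H₁ →L[ℝ] H₂) (D : H₂ →L[ℝ] H₂) (P : H₁ →L[ℝ] H₁)
    (hPsymm : IsSelfAdjoint P) (hPpos : ∀ x, 0 ≤ ⟪P x, x⟫)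
    (hpass : ∀ x₁ x₂ : H₁, ∀ y₁ y₂ : H₂,
      0 ≤ ⟪P (f x₁ - f x₂), x₁ - x₂⟫ +
          ⟪(P.comp B - ContinuousLinearMap.adjoint C) (y₁ - y₂), x₁ - x₂⟫ +
          ⟪D (y₁ - y₂), y₁ - y₂⟫)
    (F : H₂ → Set H₂) (hF : SVMonotone F)
    (c : ℝ) (hc : 0 < c)
    (hD : ∀ z ∈ Set.range (D + ContinuousLinearMap.adjoint D), c * ‖z‖ ^ 2 ≤ ⟪D z, z⟫) :
    ∀ (x₁ x₂ : H₁) (z₁ z₂ : H₁),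
      (∃ y₁, y₁ ∈ F (C x₁ - D y₁) ∧ z₁ = P (f x₁) + P (B y₁)) →
      (∃ y₂, y₂ ∈ F (C x₂ - D y₂) ∧ z₂ = P (f x₂) + P (B y₂)) →
      0 ≤ ⟪z₁ - z₂, x₁ - x₂⟫ := by
  rintro x₁ x₂ z₁ z₂ ⟨y₁, hy₁, rfl⟩ ⟨y₂, hy₂, rfl⟩
  have hmono := hF _ _ _ _ hy₁ hy₂
  have hp := hpass x₁ x₂ y₁ y₂
  have hadj : ⟪(ContinuousLinearMap.adjoint C) (y₁ - y₂), x₁ - x₂⟫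
      = ⟪y₁ - y₂, C (x₁ - x₂)⟫ :=
    ContinuousLinearMap.adjoint_inner_left C _ _
  have hsymm : ⟪y₁ - y₂, D (y₁ - y₂)⟫ = ⟪D (y₁ - y₂), y₁ - y₂⟫ :=
    real_inner_comm _ _
  have hexp : ⟪P (f x₁) + P (B y₁) - (P (f x₂) + P (B y₂)), x₁ - x₂⟫
      = ⟪P (f x₁ - f x₂), x₁ - x₂⟫ +
        ⟪(P.comp B - ContinuousLinearMap.adjoint C) (y₁ - y₂), x₁ - x₂⟫ +
        ⟪(ContinuousLinearMap.adjoint C) (y₁ - y₂), x₁ - x₂⟫ := by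
    simp only [map_sub, ContinuousLinearMap.sub_apply, ContinuousLinearMap.coe_comp',
      Function.comp_apply, inner_sub_left, inner_add_left]
    ring
  have hmono' : 0 ≤ ⟪y₁ - y₂, C (x₁ - x₂)⟫ - ⟪y₁ - y₂, D (y₁ - y₂)⟫ := by
    have : ⟪y₁ - y₂, C x₁ - D y₁ - (C x₂ - D y₂)⟫
        = ⟪y₁ - y₂, C (x₁ - x₂)⟫ - ⟪y₁ - y₂, D (y₁ - y₂)⟫ := by
      simp only [map_sub, inner_sub_right]; ring
    linarith [hmono, this ▸ hmono]
  rw [hexp, hadj]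
  linarith
end
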